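/- Scaling of entropy in the infinite-time limit under diffusion (Lemma 4.1): Let N ≥ 1 and let M be a real symmetric positive-semidefinite 2N×2N matrix. Then lim_{t→∞} ( E(M + t·I_{2N}) − N·g((t−1)/2) ) = 0; that is, for every δ > 0 there is T > 1 such that for all t ≥ T, |E(M + t·I_{2N}) − N·g((t−1)/2)| < δ. -/

import Mathlib

open scoped Classical ComplexOrder

noncomputable section

/-- The function `g(x) = (x+1)·log(x+1) − x·log x` (with `g 0 = 0` since `log 0 = 0`). -/
def gFn (x : ℝ) : ℝ := (x + 1) * Real.log (x + 1) - x * Real.log x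

/-- Single-mode entropy as a function of the symplectic eigenvalue: `G(λ) = g((λ−1)/2)`. -/
def GFn (lam : ℝ) : ℝ := gFn ((lam - 1) / 2)

/-- Inverse temperature `β(λ) = log((λ+1)/(λ−1))`. -/
def betaFn (lam : ℝ) : ℝ := Real.log ((lam + 1) / (lam - 1))

/-- The standard symplectic form matrix on `ℝ^d` (for even `d = 2N` this is the
block-diagonal matrix with `N` diagonal blocks `[[0,1],[-1,0]]`). -/
def Jmat (d : ℕ) : Matrix (Fin d) (Fin d) ℝ := fun i j =>
  if (i : ℕ) % 2 = 0 ∧ (j : ℕ) = (i : ℕ) + 1 then 1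
  else if (j : ℕ) % 2 = 0 ∧ (i : ℕ) = (j : ℕ) + 1 then -1 else 0

/-- A real `d×d` matrix is symplectic if `S·J·Sᵀ = J`. -/
def IsSymplectic {d : ℕ} (S : Matrix (Fin d) (Fin d) ℝ) : Prop :=
  S * Jmat d * S.transpose = Jmat d

/-- The doubled diagonal matrix `D(λ) = diag(λ₀,λ₀,λ₁,λ₁,…)`. -/
def Dmat (d : ℕ) (lam : ℕ → ℝ) : Matrix (Fin d) (Fin d) ℝ :=
  Matrix.diagonal fun i => lam ((i : ℕ) / 2)

/-- A valid quantum covariance matrix: `M` symmetric with `M + i·J ⪰ 0`. -/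
def IsQCov {d : ℕ} (M : Matrix (Fin d) (Fin d) ℝ) : Prop :=
  M.IsSymm ∧
    (M.map (Complex.ofReal) + Complex.I • (Jmat d).map Complex.ofReal).PosSemidef

/-- Entropy functional `E(M) = Σⱼ G(λⱼ)` where `λⱼ` are the symplectic eigenvalues of `M`:
the eigenvalues of `i·J·M` are `±λⱼ`, so `E(M) = (1/2)·Σ_{μ root of charpoly} G(|Re μ|)`. -/
def Ent {d : ℕ} (M : Matrix (Fin d) (Fin d) ℝ) : ℝ :=
  ((Matrix.charpoly (Complex.I • ((Jmat d * M).map Complex.ofReal))).roots.map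
    fun μ => GFn |μ.re|).sum / 2

/-- The matrix `I_A ⊕ 0_B`: identity on the first `a` coordinates, zero on the rest. -/
def IA0B (d a : ℕ) : Matrix (Fin d) (Fin d) ℝ :=
  Matrix.diagonal fun i => if (i : ℕ) < a then 1 else 0

/-- Assemble a symmetric 2×2 block matrix `[[A, K], [Kᵀ, B]]`. -/
def assemble2 {a b : ℕ} (A : Matrix (Fin a) (Fin a) ℝ) (K : Matrix (Fin a) (Fin b) ℝ)
    (B : Matrix (Fin b) (Fin b) ℝ) : Matrix (Fin (a + b)) (Fin (a + b)) ℝ := fun i j =>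
  if hi : (i : ℕ) < a then
    if hj : (j : ℕ) < a then A ⟨i, hi⟩ ⟨j, hj⟩
    else K ⟨i, hi⟩ ⟨(j : ℕ) - a, by have := j.isLt; omega⟩
  else
    if hj : (j : ℕ) < a then K ⟨j, hj⟩ ⟨(i : ℕ) - a, by have := i.isLt; omega⟩
    else B ⟨(i : ℕ) - a, by have := i.isLt; omega⟩ ⟨(j : ℕ) - a, by have := j.isLt; omega⟩

/-- Assemble the symmetric 3×3 block matrix
`[[Y, K₁, K₂], [K₁ᵀ, B₁, 0], [K₂ᵀ, 0, B₂]]`. -/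
def assemble3 {a b c : ℕ} (Y : Matrix (Fin a) (Fin a) ℝ)
    (K₁ : Matrix (Fin a) (Fin b) ℝ) (K₂ : Matrix (Fin a) (Fin c) ℝ)
    (B₁ : Matrix (Fin b) (Fin b) ℝ) (B₂ : Matrix (Fin c) (Fin c) ℝ) :
    Matrix (Fin (a + b + c)) (Fin (a + b + c)) ℝ := fun i j =>
  if hi : (i : ℕ) < a then
    if hj : (j : ℕ) < a then Y ⟨i, hi⟩ ⟨j, hj⟩
    else if hj' : (j : ℕ) < a + b then K₁ ⟨i, hi⟩ ⟨(j : ℕ) - a, by omega⟩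
    else K₂ ⟨i, hi⟩ ⟨(j : ℕ) - a - b, by have := j.isLt; omega⟩
  else if hi' : (i : ℕ) < a + b then
    if hj : (j : ℕ) < a then K₁ ⟨j, hj⟩ ⟨(i : ℕ) - a, by omega⟩
    else if hj' : (j : ℕ) < a + b then
      B₁ ⟨(i : ℕ) - a, by omega⟩ ⟨(j : ℕ) - a, by omega⟩
    else 0
  else
    if hj : (j : ℕ) < a then K₂ ⟨j, hj⟩ ⟨(i : ℕ) - a - b, by have := i.isLt; omega⟩
    else if hj' : (j : ℕ) < a + b then 0
    else B₂ ⟨(i : ℕ) - a - b, by have := i.isLt; omega⟩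
      ⟨(j : ℕ) - a - b, by have := j.isLt; omega⟩


/-!
The symplectic eigenvalues of `X = M + t` are the moduli of the eigenvalues of `K X`, where
`K = iJ` is a self-adjoint involution. If `K X v = μ v` then `X v = μ K v`, so
`‖X v‖ = |μ| ‖v‖` lies between `t ‖v‖` and `(t + ‖M‖) ‖v‖`, and `⟪v, X v⟫ = μ ⟪v, K v⟫` with both
inner products real, so `μ` is real. Hence all these eigenvalues lie in `[t, t + ‖M‖]`, and since
`g'(x) = log (1 + 1/x) ≤ 1/x`, each `G(|μ|)` is within `‖M‖ / (t - 1)` of `G(t) = g((t - 1)/2)`.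
-/

open Matrix Real Filter Topology

lemma Complex.im_eq_zero_of_eq_mul {μ a b : ℂ} (ha : a.im = 0) (hb : b.im = 0) (hb0 : b ≠ 0)
    (h : b = μ * a) : μ.im = 0 := by
  have hare : a.re ≠ 0 := fun h0 ↦ hb0 (by rw [h, Complex.ext (w := 0) h0 ha, mul_zero])
  have him := congrArg Complex.im h
  rw [hb, Complex.mul_im, ha, mul_zero, zero_add] at him
  exact (mul_eq_zero.mp him.symm).resolve_right hare

section Involution

variable {E : Type*} [NormedAddCommGroup E] [InnerProductSpace ℂ E] [CompleteSpace E]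

theorem ContinuousLinearMap.eigenvalue_bounds_of_involution_mul {K P : E →L[ℂ] E}
    (hK : IsSelfAdjoint K) (hKK : K * K = 1) (hP : P.IsPositive) {t : ℝ} (ht : 0 < t)
    {μ : ℂ} {v : E} (hv : v ≠ 0) (hμ : K ((P + (t : ℂ) • 1) v) = μ • v) :
    μ.im = 0 ∧ t ≤ ‖μ‖ ∧ ‖μ‖ ≤ t + ‖P‖ := by
  set X := P + (t : ℂ) • 1
  have hXv : X v = μ • K v := by
    calc X v = K (K (X v)) := by rw [← mul_apply_eq_comp, hKK]; rfl
      _ = μ • K v := by rw [hμ, map_smul]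
  have hKv : ‖K v‖ = ‖v‖ :=
    norm_map_of_mem_unitary ⟨by rw [hK.star_eq, hKK], by rw [hK.star_eq, hKK]⟩ v
  have hnorm : ‖X v‖ = ‖μ‖ * ‖v‖ := by rw [hXv, norm_smul, hKv]
  have hv0 : 0 < ‖v‖ := norm_pos_iff.mpr hv
  have hinner : inner ℂ v (X v) = inner ℂ v (P v) + (t * ‖v‖ ^ 2 : ℝ) := by
    simp [X, inner_self_eq_norm_sq_to_K]
  obtain ⟨hPre, hPim⟩ := Complex.nonneg_iff.mp (hP.inner_nonneg_right v)
  have hre : t * ‖v‖ ^ 2 ≤ (inner ℂ v (X v)).re := by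
    rw [hinner, Complex.add_re, Complex.ofReal_re]; linarith
  refine ⟨?_, ?_, ?_⟩
  · refine Complex.im_eq_zero_of_eq_mul (a := inner ℂ v (K v)) (b := inner ℂ v (X v))
      (hK.isSymmetric.im_inner_self_apply v) ?_ ?_ (by rw [hXv, inner_smul_right])
    · rw [hinner, Complex.add_im, Complex.ofReal_im, ← hPim, add_zero]
    · intro h0
      rw [h0, Complex.zero_re] at hre
      linarith [mul_pos ht (pow_pos hv0 2)]
  · have : t * ‖v‖ ^ 2 ≤ ‖μ‖ * ‖v‖ ^ 2 :=
      calc t * ‖v‖ ^ 2 ≤ (inner ℂ v (X v)).re := hre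
        _ ≤ ‖v‖ * ‖X v‖ := re_inner_le_norm (𝕜 := ℂ) v (X v)
        _ = ‖μ‖ * ‖v‖ ^ 2 := by rw [hnorm]; ring
    exact le_of_mul_le_mul_right this (by positivity)
  · have : ‖μ‖ * ‖v‖ ≤ (t + ‖P‖) * ‖v‖ :=
      calc ‖μ‖ * ‖v‖ = ‖P v + (t : ℂ) • v‖ := by rw [← hnorm]; rfl
        _ ≤ ‖P‖ * ‖v‖ + t * ‖v‖ := by
          grw [norm_add_le, norm_smul, P.le_opNorm, Complex.norm_real, norm_of_nonneg ht.le]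
        _ = (t + ‖P‖) * ‖v‖ := by ring
    exact le_of_mul_le_mul_right this hv0

end Involution

lemma Matrix.PosSemidef.map_ofReal {n : Type*} [Fintype n] {M : Matrix n n ℝ}
    (hM : M.PosSemidef) : (M.map ((↑) : ℝ → ℂ)).PosSemidef := by
  open scoped MatrixOrder in
  obtain ⟨B, rfl⟩ := CStarAlgebra.nonneg_iff_eq_star_mul_self.mp hM.nonneg
  rw [show ((↑) : ℝ → ℂ) = Complex.ofRealHom from rfl, Matrix.map_mul, star_eq_conjTranspose,
    conjTranspose_map (⇑Complex.ofRealHom) fun _ ↦ (Complex.conj_ofReal _).symm]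
  exact posSemidef_conjTranspose_mul_self _

lemma Matrix.exists_mulVec_eq_smul_of_mem_roots_charpoly {R n : Type*} [CommRing R] [IsDomain R]
    [Fintype n] [DecidableEq n] {A : Matrix n n R} {μ : R} (hμ : μ ∈ A.charpoly.roots) :
    ∃ v ≠ 0, A *ᵥ v = μ • v := by
  rw [← charpoly_toLin'] at hμ
  obtain ⟨v, hv⟩ := ((Module.End.hasEigenvalue_iff_isRoot_charpoly _ _).mpr
    (Polynomial.isRoot_of_mem_roots hμ)).exists_hasEigenvector
  exact ⟨v, hv.2, by rw [← toLin'_apply, hv.apply_eq_smul]⟩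

lemma Matrix.card_roots_charpoly {K n : Type*} [Field K] [IsAlgClosed K] [Fintype n]
    [DecidableEq n] (A : Matrix n n K) : A.charpoly.roots.card = Fintype.card n := by
  rw [Polynomial.splits_iff_card_roots.mp (IsAlgClosed.splits _), A.charpoly_natDegree_eq_dim]

lemma Multiset.abs_sum_map_sub_card_mul_le {ι : Type*} (s : Multiset ι) (f : ι → ℝ) {c b : ℝ}
    (h : ∀ x ∈ s, |f x - c| ≤ b) : |(s.map f).sum - card s * c| ≤ card s * b := by
  rw [← nsmul_eq_mul, ← sum_replicate, ← map_const', ← sum_map_sub]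
  calc |(s.map fun x ↦ f x - c).sum| ≤ (s.map fun x ↦ |f x - c|).sum := by
        simpa [map_map] using abs_sum_le_sum_abs (s := s.map fun x ↦ f x - c)
    _ ≤ (s.map fun _ ↦ b).sum := sum_map_le_sum_map _ _ h
    _ = card s * b := by rw [map_const', sum_replicate, nsmul_eq_mul]

lemma Jmat_transpose (d : ℕ) : (Jmat d)ᵀ = -Jmat d := by
  ext i j
  rw [transpose_apply, neg_apply]
  simp only [Jmat]
  split_ifs <;> first | omega | norm_num

lemma Jmat_mul_self (N : ℕ) : Jmat (2 * N) * Jmat (2 * N) = -1 := by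
  ext i j
  have := i.isLt
  -- the only nonzero entry of row `i` is in the column of the partner of `i` in its `2 × 2` block
  let p : Fin (2 * N) := ⟨if (i : ℕ) % 2 = 0 then i + 1 else i - 1, by split_ifs <;> omega⟩
  rw [mul_apply, Finset.sum_eq_single p, neg_apply, one_apply]
  · simp only [Jmat, p, Fin.ext_iff]
    split_ifs <;> first | omega | norm_num
  · intro k _ hk
    simp only [Jmat, p, ne_eq, Fin.ext_iff] at hk ⊢
    split_ifs at hk ⊢ <;> first | omega | norm_num
  · simp

lemma isSelfAdjoint_I_smul_Jmat (d : ℕ) :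
    IsSelfAdjoint (Complex.I • (Jmat d).map ((↑) : ℝ → ℂ)) := by
  rw [IsSelfAdjoint, star_smul, star_eq_conjTranspose, ← conjTranspose_map _
    fun _ ↦ (Complex.conj_ofReal _).symm, conjTranspose_eq_transpose_of_trivial, Jmat_transpose]
  ext i j
  simp

lemma I_smul_Jmat_mul_self (N : ℕ) :
    (Complex.I • (Jmat (2 * N)).map ((↑) : ℝ → ℂ)) * (Complex.I • (Jmat (2 * N)).map (↑)) =
      1 := by
  rw [smul_mul_smul_comm, Complex.I_mul_I, show ((↑) : ℝ → ℂ) = Complex.ofRealHom from rfl,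
    ← Matrix.map_mul, Jmat_mul_self]
  ext i j
  simp [one_apply, apply_ite]

theorem exists_abs_re_mem_Icc_of_mem_roots_charpoly (N : ℕ)
    {M : Matrix (Fin (2 * N)) (Fin (2 * N)) ℝ} (hM : M.PosSemidef) :
    ∃ C : ℝ, ∀ t : ℝ, 0 < t → ∀ μ ∈ (charpoly
      (Complex.I • ((Jmat (2 * N) * (M + t • 1)).map ((↑) : ℝ → ℂ)))).roots,
      |μ.re| ∈ Set.Icc t (t + C) := by
  refine ⟨‖toEuclideanCLM (𝕜 := ℂ) (M.map (↑))‖, fun t ht μ hμ ↦ ?_⟩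
  have hA : Complex.I • ((Jmat (2 * N) * (M + t • 1)).map ((↑) : ℝ → ℂ)) =
      (Complex.I • (Jmat (2 * N)).map (↑)) * (M.map (↑) + (t : ℂ) • 1) := by
    rw [show ((↑) : ℝ → ℂ) = Complex.ofRealHom from rfl, Matrix.map_mul, smul_mul_assoc]
    congr 2
    ext i j
    by_cases h : i = j <;> simp [h]
  obtain ⟨v, hv, hAv⟩ := exists_mulVec_eq_smul_of_mem_roots_charpoly hμ
  set K := toEuclideanCLM (𝕜 := ℂ) (Complex.I • (Jmat (2 * N)).map (↑))
  set P := toEuclideanCLM (𝕜 := ℂ) (M.map (↑))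
  have hK : IsSelfAdjoint K := (isSelfAdjoint_I_smul_Jmat _).map _
  have hKK : K * K = 1 := by rw [← map_mul, I_smul_Jmat_mul_self, map_one]
  have hP : P.IsPositive := isPositive_toEuclideanLin_iff.mpr hM.map_ofReal
  have hX : P + (t : ℂ) • 1 = toEuclideanCLM (𝕜 := ℂ) (M.map (↑) + (t : ℂ) • 1) := by
    simp only [P, map_add, map_smul, map_one]
  have hKX : K ((P + (t : ℂ) • 1) (WithLp.toLp 2 v)) = μ • WithLp.toLp 2 v := by
    simp only [hX, K, toEuclideanCLM_toLp, mulVec_mulVec, ← hA, hAv, WithLp.toLp_smul]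
  obtain ⟨him, hlow, hup⟩ :=
    ContinuousLinearMap.eigenvalue_bounds_of_involution_mul hK hKK hP ht (by simpa using hv) hKX
  rw [Complex.abs_re_eq_norm.mpr him]
  exact ⟨hlow, hup⟩

lemma hasDerivAt_gFn {x : ℝ} (hx : 0 < x) : HasDerivAt gFn (log (x + 1) - log x) x := by
  have h := ((hasDerivAt_mul_log (x := x + 1) (by positivity)).comp x
    ((hasDerivAt_id x).add_const 1)).sub (hasDerivAt_mul_log hx.ne')
  rwa [mul_one, add_sub_add_right_eq_sub] at h

lemma abs_gFn_sub_le {a b : ℝ} (ha : 0 < a) (hab : a ≤ b) : |gFn b - gFn a| ≤ (b - a) / a := by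
  have hderiv : ∀ x ∈ Set.Ici a, ‖log (x + 1) - log x‖ ≤ 1 / a := by
    intro x hx
    have hx0 : 0 < x := ha.trans_le hx
    have hlog : 0 ≤ log ((x + 1) / x) := log_nonneg (by rw [le_div_iff₀ hx0]; linarith)
    rw [← log_div (by positivity) hx0.ne', norm_of_nonneg hlog]
    calc log ((x + 1) / x) ≤ (x + 1) / x - 1 := log_le_sub_one_of_pos (by positivity)
      _ = 1 / x := by field_simp; ring
      _ ≤ 1 / a := one_div_le_one_div_of_le ha hx
  have := (convex_Ici a).norm_image_sub_le_of_norm_hasDerivWithin_le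
    (fun x hx ↦ (hasDerivAt_gFn (ha.trans_le hx)).hasDerivWithinAt) hderiv Set.self_mem_Ici hab
  rwa [norm_eq_abs, norm_eq_abs, abs_of_nonneg (sub_nonneg.mpr hab), one_div_mul_eq_div] at this

lemma abs_GFn_sub_le {s r : ℝ} (hs : 1 < s) (hsr : s ≤ r) :
    |GFn r - GFn s| ≤ (r - s) / (s - 1) := by
  have := abs_gFn_sub_le (a := (s - 1) / 2) (b := (r - 1) / 2) (by linarith) (by linarith)
  rwa [show ((r - 1) / 2 - (s - 1) / 2) / ((s - 1) / 2) = (r - s) / (s - 1) by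
    field_simp; ring] at this

theorem entropy_infinite_time_general (N : ℕ)
    (M : Matrix (Fin (2 * N)) (Fin (2 * N)) ℝ) (hM : M.PosSemidef) :
    Filter.Tendsto (fun t : ℝ => Ent (M + t • 1) - (N : ℝ) * gFn ((t - 1) / 2))
      Filter.atTop (nhds 0) := by
  obtain ⟨C, hC⟩ := exists_abs_re_mem_Icc_of_mem_roots_charpoly N hM
  have hlim : Tendsto (fun t : ℝ ↦ N * C / (t - 1)) atTop (𝓝 0) :=
    tendsto_const_nhds.div_atTop (tendsto_atTop_add_const_right _ _ tendsto_id)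
  refine squeeze_zero_norm' ?_ hlim
  filter_upwards [eventually_gt_atTop 1] with t ht
  set S := (Complex.I • ((Jmat (2 * N) * (M + t • 1)).map ((↑) : ℝ → ℂ))).charpoly.roots
  have hS : (Multiset.card S : ℝ) = 2 * N := by simp [S, Matrix.card_roots_charpoly]
  have hG : ∀ μ ∈ S, |GFn |μ.re| - GFn t| ≤ C / (t - 1) := by
    intro μ hμ
    obtain ⟨hlo, hhi⟩ := hC t (by linarith) μ hμ
    calc _ ≤ (|μ.re| - t) / (t - 1) := abs_GFn_sub_le ht hlo
      _ ≤ C / (t - 1) := div_le_div_of_nonneg_right (by linarith) (by linarith)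
  have hsum := S.abs_sum_map_sub_card_mul_le _ hG
  have hEnt : Ent (M + t • 1) - N * gFn ((t - 1) / 2) =
      ((S.map fun μ ↦ GFn |μ.re|).sum - Multiset.card S * GFn t) / 2 := by
    rw [hS, Ent, GFn]; ring
  rw [hS] at hsum
  rw [norm_eq_abs, hEnt, abs_div, abs_two, hS]
  calc _ ≤ 2 * N * (C / (t - 1)) / 2 := by gcongr
    _ = N * C / (t - 1) := by ring

/-- Scaling of entropy in the infinite-time limit under diffusion (Lemma 4.1). -/
theorem entropy_infinite_time (N : ℕ) (hN : 1 ≤ N)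
    (M : Matrix (Fin (2 * N)) (Fin (2 * N)) ℝ) (hM : M.PosSemidef) :
    Filter.Tendsto (fun t : ℝ => Ent (M + t • 1) - (N : ℝ) * gFn ((t - 1) / 2))
      Filter.atTop (nhds 0) :=
  entropy_infinite_time_general N M hM
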